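/- arXiv:2511.11384 — 7 statements merged into one kernel-verified Lean document; each statement's English description precedes it below -/
import Mathlib

section
/- Let X be a real normed space and let f : X → ℝ be Fréchet continuously differentiable. Then the following three properties are equivalent: (a) f is quasiconvex on X; (b) for all x, y ∈ X, if f(x) ≤ f(y) then ⟨∇f(y), y − x⟩ ≥ 0; (c) for all x, y ∈ X, if ⟨∇f(x), y − x⟩ > 0 then ⟨∇f(y), y − x⟩ ≥ 0. -/
open Set Filter Topology

private lemma lineDeriv_aux {X : Type*} [NormedAddCommGroup X] [NormedSpace ℝ X]
    (f : X → ℝ) (f' : X → X →L[ℝ] ℝ) (hderiv : ∀ x, HasFDerivAt f (f' x) x)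
    (x v : X) (t : ℝ) :
    HasDerivAt (fun s : ℝ => f (x + s • v)) (f' (x + t • v) v) t := by
  have hc : HasDerivAt (fun s : ℝ => x + s • v) v t := by
    simpa using ((hasDerivAt_id t).smul_const v).const_add x
  exact (hderiv (x + t • v)).comp_hasDerivAt t hc

private lemma exists_gt_of_deriv_pos_aux {g : ℝ → ℝ} {d : ℝ}
    (h : HasDerivAt g d 0) (hd : 0 < d) : ∃ s : ℝ, 0 < s ∧ s < 1 ∧ g 0 < g s := by
  have h1 : Tendsto (slope g 0) (𝓝[≠] 0) (𝓝 d) := hasDerivAt_iff_tendsto_slope.mp h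
  have h2 : ∀ᶠ s in 𝓝[≠] (0:ℝ), 0 < slope g 0 s := h1.eventually (eventually_gt_nhds hd)
  have h3 : ∀ᶠ s in 𝓝[>] (0:ℝ), 0 < slope g 0 s :=
    h2.filter_mono (nhdsWithin_mono 0 (fun s hs => ne_of_gt hs))
  have h4 : ∀ᶠ s in 𝓝[>] (0:ℝ), s < 1 :=
    eventually_nhdsWithin_of_eventually_nhds (eventually_lt_nhds one_pos)
  have h5 : ∀ᶠ s in 𝓝[>] (0:ℝ), 0 < s := self_mem_nhdsWithin
  obtain ⟨s, hs1, hs2, hs3⟩ := (h3.and (h4.and h5)).exists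
  refine ⟨s, hs3, hs2, ?_⟩
  rw [slope_def_field] at hs1
  rcases div_pos_iff.mp hs1 with ⟨hnum, _⟩ | ⟨_, hden⟩
  · linarith
  · linarith

/-- Equivalence of (a) quasiconvexity, (b) the Arrow–Enthoven gradient condition,
and (c) quasimonotonicity of the gradient, for a Fréchet continuously
differentiable function on a real normed space. -/
theorem quasiconvex_tfae {X : Type*} [NormedAddCommGroup X] [NormedSpace ℝ X]
    (f : X → ℝ) (f' : X → X →L[ℝ] ℝ)
    (hderiv : ∀ x, HasFDerivAt f (f' x) x) (hcont : Continuous f') :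
    ((∀ x y : X, ∀ l : ℝ, l ∈ Set.Ioo (0 : ℝ) 1 →
        f (l • x + (1 - l) • y) ≤ max (f x) (f y)) ↔
      (∀ x y : X, f x ≤ f y → 0 ≤ f' y (y - x))) ∧
    ((∀ x y : X, f x ≤ f y → 0 ≤ f' y (y - x)) ↔
      (∀ x y : X, 0 < f' x (y - x) → 0 ≤ f' y (y - x))) := by
  have hfcont : Continuous f := continuous_iff_continuousAt.mpr fun x => (hderiv x).continuousAt
  constructor
  · constructor
    · -- (a) → (b)
      intro hA x y hxy
      by_contra hneg
      push_neg at hneg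
      have hg0 : HasDerivAt (fun s : ℝ => f (y + s • (x - y))) (f' y (x - y)) 0 := by
        simpa using lineDeriv_aux f f' hderiv y (x - y) 0
      have hd : 0 < f' y (x - y) := by
        have he : f' y (x - y) = -(f' y (y - x)) := by
          rw [← neg_sub y x, map_neg]
        linarith
      obtain ⟨s, hs0, hs1, hgs⟩ := exists_gt_of_deriv_pos_aux hg0 hd
      have h1 : y + s • (x - y) = s • x + (1 - s) • y := by module
      have h2 := hA x y s ⟨hs0, hs1⟩
      rw [← h1] at h2
      have h3 : max (f x) (f y) = f y := max_eq_right hxy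
      rw [h3] at h2
      simp only [zero_smul, add_zero] at hgs
      linarith
    · -- (b) → (a)
      intro hB x y l hl
      by_contra hgt
      push_neg at hgt
      set c := max (f x) (f y) with hc
      set g := fun t : ℝ => f (x + t • (y - x)) with hgdef
      have hgcont : Continuous g := hfcont.comp (by continuity)
      have hgd : ∀ t, HasDerivAt g (f' (x + t • (y - x)) (y - x)) t :=
        fun t => lineDeriv_aux f f' hderiv x (y - x) t
      set t0 := 1 - l with ht0def
      have ht00 : 0 < t0 := by rw [ht0def]; linarith [hl.2]
      have ht01 : t0 < 1 := by rw [ht0def]; linarith [hl.1]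
      have hgt0 : c < g t0 := by
        have heq : x + t0 • (y - x) = l • x + (1 - l) • y := by
          rw [ht0def]; module
        simpa [hgdef, heq] using hgt
      set S := Icc (0:ℝ) t0 ∩ {t | g t ≤ c} with hSdef
      have hS0 : (0:ℝ) ∈ S := by
        constructor
        · exact ⟨le_refl 0, ht00.le⟩
        · show g 0 ≤ c
          simp [hgdef, hc]
      have hSbdd : BddAbove S := ⟨t0, fun t ht => ht.1.2⟩
      have hSclosed : IsClosed S :=
        isClosed_Icc.inter (isClosed_le hgcont continuous_const)
      set α := sSup S with hαdef
      have hαS : α ∈ S := hSclosed.csSup_mem ⟨0, hS0⟩ hSbdd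
      have hα0 : 0 ≤ α := hαS.1.1
      have hαc : g α ≤ c := hαS.2
      have hαlt : α < t0 := by
        rcases lt_or_eq_of_le hαS.1.2 with h | h
        · exact h
        · rw [h] at hαc; linarith
      have hmid : ∀ t, α < t → t ≤ t0 → c < g t := by
        intro t h1 h2
        by_contra h
        push_neg at h
        have : t ∈ S := ⟨⟨le_trans hα0 h1.le, h2⟩, h⟩
        exact absurd (le_csSup hSbdd this) (not_le.mpr h1)
      have hderiv0 : ∀ t, α < t → t < t0 → f' (x + t • (y - x)) (y - x) = 0 := by
        intro t h1 h2
        set z := x + t • (y - x) with hzdef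
        have hgtc : c < g t := hmid t h1 h2.le
        have ht0' : 0 < t := lt_of_le_of_lt hα0 h1
        have ht1 : t < 1 := h2.trans ht01
        have hfx : f x ≤ f z := le_trans (le_max_left _ _) hgtc.le
        have hfy : f y ≤ f z := le_trans (le_max_right _ _) hgtc.le
        have h1' := hB x z hfx
        have h2' := hB y z hfy
        have e1 : z - x = t • (y - x) := by rw [hzdef]; module
        have e2 : z - y = (t - 1) • (y - x) := by rw [hzdef]; module
        rw [e1, map_smul, smul_eq_mul] at h1'
        rw [e2, map_smul, smul_eq_mul] at h2'
        have hp : 0 ≤ f' z (y - x) := by nlinarith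
        have hn : f' z (y - x) ≤ 0 := by nlinarith
        linarith
      have hconst : ∀ t ∈ Ioo α t0, g t0 = g t := by
        intro t ht
        have := constant_of_has_deriv_right_zero (f := g) (a := t) (b := t0)
          hgcont.continuousOn ?_ t0 ⟨ht.2.le, le_rfl⟩
        · exact this
        · intro s hs
          have hs1 : α < s := lt_of_lt_of_le ht.1 hs.1
          have hd0 : HasDerivAt g 0 s := by
            have := hgd s
            rwa [hderiv0 s hs1 hs.2] at this
          exact hd0.hasDerivWithinAt
      have hne : (𝓝[Ioo α t0] α).NeBot := by
        apply mem_closure_iff_nhdsWithin_neBot.mp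
        rw [closure_Ioo hαlt.ne]
        exact ⟨le_rfl, hαlt.le⟩
      have hl1 : Tendsto g (𝓝[Ioo α t0] α) (𝓝 (g α)) :=
        (hgcont.tendsto α).mono_left nhdsWithin_le_nhds
      have hl2 : Tendsto g (𝓝[Ioo α t0] α) (𝓝 (g t0)) := by
        apply Tendsto.congr' _ (tendsto_const_nhds (α := ℝ) (x := g t0))
        filter_upwards [self_mem_nhdsWithin] with t ht
        exact hconst t ht
      have : g α = g t0 := tendsto_nhds_unique hl1 hl2
      linarith
  · constructor
    · -- (b) → (c)
      intro hB x y hxy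
      by_contra hneg
      push_neg at hneg
      have h1 : ¬ f x ≤ f y := fun h => absurd (hB x y h) (not_le.mpr hneg)
      have h2 : f y ≤ f x := le_of_not_ge h1
      have h3 := hB y x h2
      have h4 : f' x (x - y) = -(f' x (y - x)) := by rw [← neg_sub y x, map_neg]
      linarith
    · -- (c) → (b)
      intro hC x y hxy
      by_contra hneg
      push_neg at hneg
      set v := x - y with hvdef
      have hd0 : 0 < f' y v := by
        have he : f' y v = -(f' y (y - x)) := by rw [hvdef, ← neg_sub y x, map_neg]
        linarith
      set g := fun t : ℝ => f (y + t • v) with hgdef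
      have hgd : ∀ t, HasDerivAt g (f' (y + t • v) v) t :=
        fun t => lineDeriv_aux f f' hderiv y v t
      have hgcont : Continuous g := hfcont.comp (by continuity)
      have hpos : ∀ t : ℝ, 0 < t → t ≤ 1 → 0 ≤ f' (y + t • v) v := by
        intro t ht ht1
        set z := y + t • v with hzdef
        have hzy : z - y = t • v := by rw [hzdef]; module
        have hhyp : 0 < f' y (z - y) := by
          rw [hzy, map_smul, smul_eq_mul]
          exact mul_pos ht hd0
        have hcz := hC y z hhyp
        rw [hzy, map_smul, smul_eq_mul] at hcz
        nlinarith
      have hmono : MonotoneOn g (Icc (0:ℝ) 1) := by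
        apply monotoneOn_of_deriv_nonneg (convex_Icc 0 1) hgcont.continuousOn
        · intro t _
          exact (hgd t).differentiableAt.differentiableWithinAt
        · intro t ht
          rw [interior_Icc] at ht
          rw [(hgd t).deriv]
          exact hpos t ht.1 ht.2.le
      obtain ⟨s, hs0, hs1, hgs⟩ := exists_gt_of_deriv_pos_aux (by simpa using hgd 0) hd0
      have hle : g s ≤ g 1 := hmono ⟨hs0.le, hs1.le⟩ ⟨zero_le_one, le_rfl⟩ hs1.le
      have hg1 : g 1 = f x := by simp [hgdef, hvdef]
      have hg0 : g 0 = f y := by simp [hgdef]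
      linarith
end

section
/- Let X be a real normed space and let f : X → ℝ be Fréchet continuously differentiable. Suppose that for all x, y ∈ X, f(x) ≤ f(y) implies ⟨∇f(y), y − x⟩ ≥ 0. Then for all x, y ∈ X, ⟨∇f(x), y − x⟩ > 0 implies ⟨∇f(y), y − x⟩ ≥ 0. -/
theorem gradient_cond_imp_quasimonotone_general {X : Type*} [NormedAddCommGroup X] [NormedSpace ℝ X]
    (f : X → ℝ) (f' : X → X →L[ℝ] ℝ)
    (hb : ∀ x y : X, f x ≤ f y → 0 ≤ f' y (y - x)) :
    ∀ x y : X, 0 < f' x (y - x) → 0 ≤ f' y (y - x) := by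
  intro x y hx
  by_contra! hy
  have hfyx : f y < f x := lt_of_not_ge fun hfxy => hy.not_ge (hb x y hfxy)
  have hyx := hb y x hfyx.le
  rw [← neg_sub, map_neg] at hyx
  linarith

/-- The Arrow–Enthoven gradient condition (b) implies the quasimonotonicity
condition (c) for the gradient. -/
theorem gradient_cond_imp_quasimonotone {X : Type*} [NormedAddCommGroup X] [NormedSpace ℝ X]
    (f : X → ℝ) (f' : X → X →L[ℝ] ℝ)
    (hderiv : ∀ x, HasFDerivAt f (f' x) x) (hcont : Continuous f')
    (hb : ∀ x y : X, f x ≤ f y → 0 ≤ f' y (y - x)) :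
    ∀ x y : X, 0 < f' x (y - x) → 0 ≤ f' y (y - x) :=
  gradient_cond_imp_quasimonotone_general f f' hb
end

section
/- Let X be a real normed space and let f : X → ℝ be Fréchet continuously differentiable. Suppose that for all x, y ∈ X, ⟨∇f(x), y − x⟩ > 0 implies ⟨∇f(y), y − x⟩ ≥ 0. Then f is quasiconvex on X, i.e., for all x, y ∈ X and all λ ∈ (0,1), f(λx + (1−λ)y) ≤ max{f(x), f(y)}. -/
/-!
Restrict `f` to the segment from `y` to `x`. If `f` exceeded `max (f x) (f y)` at an interior point,
the mean value theorem would give a point before it where the derivative along the segment is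
positive and a point after it where it is negative, contradicting quasimonotonicity of the gradient.
-/

open Set AffineMap

def IsQuasimonotone {X : Type*} [AddCommGroup X] [Module ℝ X] (F : X → X →ₗ[ℝ] ℝ) : Prop :=
  ∀ x y, 0 < F x (y - x) → 0 ≤ F y (y - x)

theorem le_max_of_deriv_pos_imp_nonneg {g g' : ℝ → ℝ} {a m b : ℝ} (ham : a < m) (hmb : m < b)
    (hg : ContinuousOn g (Icc a b)) (hderiv : ∀ t ∈ Ioo a b, HasDerivAt g (g' t) t)
    (hmono : ∀ s t, s < t → 0 < g' s → 0 ≤ g' t) :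
    g m ≤ max (g a) (g b) := by
  by_contra! hmax
  obtain ⟨s, hs, hs_slope⟩ := exists_hasDerivAt_eq_slope g g' ham
    (hg.mono (Icc_subset_Icc_right hmb.le)) fun u hu => hderiv u ⟨hu.1, hu.2.trans hmb⟩
  obtain ⟨t, ht, ht_slope⟩ := exists_hasDerivAt_eq_slope g g' hmb
    (hg.mono (Icc_subset_Icc_left ham.le)) fun u hu => hderiv u ⟨ham.trans hu.1, hu.2⟩
  have hs_pos : 0 < g' s := by
    rw [hs_slope]
    exact div_pos (by linarith [le_max_left (g a) (g b)]) (sub_pos.2 ham)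
  have ht_nonneg : 0 ≤ (g b - g m) / (b - m) := ht_slope ▸ hmono s t (hs.2.trans ht.1) hs_pos
  have : g m ≤ g b := by
    rw [le_div_iff₀ (sub_pos.2 hmb), zero_mul, sub_nonneg] at ht_nonneg
    exact ht_nonneg
  linarith [le_max_right (g a) (g b)]

theorem IsQuasimonotone.apply_lineMap {X : Type*} [AddCommGroup X] [Module ℝ X]
    {F : X → X →ₗ[ℝ] ℝ} (hF : IsQuasimonotone F) (p q : X) {s t : ℝ} (hst : s < t)
    (hs : 0 < F (lineMap p q s) (q - p)) : 0 ≤ F (lineMap p q t) (q - p) := by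
  have hdiff : lineMap p q t - lineMap p q s = (t - s) • (q - p) := by
    simp only [lineMap_apply_module']
    module
  have hpos : 0 < t - s := sub_pos.2 hst
  have h := hF (lineMap p q s) (lineMap p q t)
  rw [hdiff, map_smul, map_smul, smul_eq_mul, smul_eq_mul] at h
  exact (mul_nonneg_iff_of_pos_left hpos).1 (h (mul_pos hpos hs))

theorem IsQuasimonotone.le_max_of_hasFDerivAt {X : Type*} [NormedAddCommGroup X]
    [NormedSpace ℝ X] {f : X → ℝ} {f' : X → X →L[ℝ] ℝ} (hderiv : ∀ x, HasFDerivAt f (f' x) x)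
    (hf' : IsQuasimonotone fun x => (f' x : X →ₗ[ℝ] ℝ)) (p q : X) {l : ℝ} (hl : l ∈ Ioo (0 : ℝ) 1) :
    f (lineMap p q l) ≤ max (f p) (f q) := by
  have hline : ∀ t, HasDerivAt (fun t => f (lineMap p q t)) (f' (lineMap p q t) (q - p)) t :=
    fun t => (hderiv _).comp_hasDerivAt t hasDerivAt_lineMap
  have h := le_max_of_deriv_pos_imp_nonneg hl.1 hl.2
    (fun t _ => (hline t).continuousAt.continuousWithinAt) (fun t _ => hline t)
    fun s t hst hs => hf'.apply_lineMap p q hst hs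
  simpa only [lineMap_apply_zero, lineMap_apply_one] using h

theorem quasimonotone_imp_quasiconvex_general {X : Type*} [NormedAddCommGroup X] [NormedSpace ℝ X]
    (f : X → ℝ) (f' : X → X →L[ℝ] ℝ)
    (hderiv : ∀ x, HasFDerivAt f (f' x) x)
    (hc : ∀ x y : X, 0 < f' x (y - x) → 0 ≤ f' y (y - x)) :
    ∀ x y : X, ∀ l : ℝ, l ∈ Set.Ioo (0 : ℝ) 1 →
      f (l • x + (1 - l) • y) ≤ max (f x) (f y) := by
  intro x y l hl
  have h := IsQuasimonotone.le_max_of_hasFDerivAt hderiv hc y x hl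
  rwa [lineMap_apply_module, add_comm, max_comm] at h

/-- Quasimonotonicity of the gradient (condition (c)) implies quasiconvexity. -/
theorem quasimonotone_imp_quasiconvex {X : Type*} [NormedAddCommGroup X] [NormedSpace ℝ X]
    (f : X → ℝ) (f' : X → X →L[ℝ] ℝ)
    (hderiv : ∀ x, HasFDerivAt f (f' x) x) (hcont : Continuous f')
    (hc : ∀ x y : X, 0 < f' x (y - x) → 0 ≤ f' y (y - x)) :
    ∀ x y : X, ∀ l : ℝ, l ∈ Set.Ioo (0 : ℝ) 1 →
      f (l • x + (1 - l) • y) ≤ max (f x) (f y) :=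
  quasimonotone_imp_quasiconvex_general f f' hderiv hc
end

section
/- Let X be a real normed space and let f : X → ℝ be Fréchet continuously differentiable. Suppose that for all x, y ∈ X, f(x) ≤ f(y) implies ⟨∇f(y), y − x⟩ ≥ 0. Then f is quasiconvex on X, i.e., for all x, y ∈ X and all λ ∈ (0,1), f(λx + (1−λ)y) ≤ max{f(x), f(y)}. -/
/-- The Arrow–Enthoven gradient condition (b) implies quasiconvexity. -/
theorem gradient_cond_imp_quasiconvex {X : Type*} [NormedAddCommGroup X] [NormedSpace ℝ X]
    (f : X → ℝ) (f' : X → X →L[ℝ] ℝ)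
    (hderiv : ∀ x, HasFDerivAt f (f' x) x) (hcont : Continuous f')
    (hb : ∀ x y : X, f x ≤ f y → 0 ≤ f' y (y - x)) :
    ∀ x y : X, ∀ l : ℝ, l ∈ Set.Ioo (0 : ℝ) 1 →
      f (l • x + (1 - l) • y) ≤ max (f x) (f y) := by
  intro x y l hl
  set v := y - x with hv
  set g : ℝ → ℝ := fun t => f (x + t • v) with hg
  set M := max (f x) (f y) with hM
  have hf : Continuous f := continuous_iff_continuousAt.mpr fun z => (hderiv z).continuousAt
  have hgc : Continuous g := by
    apply hf.comp
    exact continuous_const.add (continuous_id.smul continuous_const)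
  have hgd : ∀ t : ℝ, HasDerivAt g (f' (x + t • v) v) t := by
    intro t
    have h1 : HasDerivAt (fun t : ℝ => x + t • v) v t := by
      simpa using ((hasDerivAt_id t).smul_const v).const_add x
    exact (hderiv (x + t • v)).comp_hasDerivAt t h1
  set t0 := 1 - l with ht0def
  have ht0 : t0 ∈ Set.Ioo (0 : ℝ) 1 := ⟨by simp [ht0def]; linarith [hl.2], by simp [ht0def]; linarith [hl.1]⟩
  have hpt : l • x + (1 - l) • y = x + t0 • v := by
    simp only [ht0def, hv]
    module
  rw [hpt]
  show g t0 ≤ M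
  by_contra hcon
  push_neg at hcon
  -- derivative is zero wherever g t > M, for t ∈ (0,1)
  have hzero : ∀ t : ℝ, t ∈ Set.Ioo (0 : ℝ) 1 → M < g t → f' (x + t • v) v = 0 := by
    intro t ht hMt
    set z := x + t • v with hz
    have h1 : 0 ≤ f' z (z - x) := hb x z (le_of_lt (lt_of_le_of_lt (le_max_left _ _) hMt))
    have h2 : 0 ≤ f' z (z - y) := hb y z (le_of_lt (lt_of_le_of_lt (le_max_right _ _) hMt))
    have e1 : z - x = t • v := by simp [hz]
    have e2 : z - y = (t - 1) • v := by
      simp only [hz, hv]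
      module
    rw [e1, map_smul, smul_eq_mul] at h1
    rw [e2, map_smul, smul_eq_mul] at h2
    nlinarith [ht.1, ht.2, h1, h2]
  -- the set of points in [0, t0] where g ≤ M
  set S : Set ℝ := Set.Icc 0 t0 ∩ {t | g t ≤ M} with hS
  have hg0 : g 0 = f x := by simp [hg]
  have h0S : (0 : ℝ) ∈ S := ⟨⟨le_refl 0, le_of_lt ht0.1⟩, by simp [hg0, hM]⟩
  have hSne : S.Nonempty := ⟨0, h0S⟩
  have hSbdd : BddAbove S := ⟨t0, fun t ht => ht.1.2⟩
  have hSclosed : IsClosed S := (isClosed_Icc).inter (isClosed_le hgc continuous_const)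
  set a := sSup S with ha
  have haS : a ∈ S := hSclosed.csSup_mem hSne hSbdd
  have ha0 : 0 ≤ a := le_csSup hSbdd h0S
  have haM : g a ≤ M := haS.2
  have hat0 : a < t0 := lt_of_le_of_ne haS.1.2 (fun h => by rw [h] at haM; linarith)
  have hgt : ∀ s, s ∈ Set.Ioc a t0 → M < g s := by
    intro s hs
    by_contra hle
    push_neg at hle
    have : s ∈ S := ⟨⟨le_trans ha0 (le_of_lt hs.1), hs.2⟩, hle⟩
    exact absurd (le_csSup hSbdd this) (not_le.mpr hs.1)
  have hconst : ∀ s, s ∈ Set.Ioc a t0 → g s = g t0 := by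
    intro s hs
    have key := constant_of_has_deriv_right_zero (f := g) (a := s) (b := t0)
      (hgc.continuousOn) ?_ t0 ⟨hs.2, le_refl t0⟩
    · exact key.symm
    · intro u hu
      have hu1 : u ∈ Set.Ioo (0 : ℝ) 1 :=
        ⟨lt_of_le_of_lt ha0 (lt_of_lt_of_le hs.1 hu.1), lt_trans hu.2 ht0.2⟩
      have hMu : M < g u := hgt u ⟨lt_of_lt_of_le hs.1 hu.1, le_of_lt hu.2⟩
      have := hgd u
      rw [hzero u hu1 hMu] at this
      exact this.hasDerivWithinAt
  -- g tends to g a and to g t0 along 𝓝[>] a, contradiction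
  have hIoc : Set.Ioc a t0 ∈ nhdsWithin a (Set.Ioi a) :=
    Ioc_mem_nhdsGT_of_mem ⟨le_refl a, hat0⟩
  have htend1 : Filter.Tendsto g (nhdsWithin a (Set.Ioi a)) (nhds (g a)) :=
    (hgc.continuousAt).continuousWithinAt
  have htend2 : Filter.Tendsto g (nhdsWithin a (Set.Ioi a)) (nhds (g t0)) := by
    refine Filter.Tendsto.congr' ?_ tendsto_const_nhds
    exact Filter.eventuallyEq_of_mem hIoc (fun s hs => (hconst s hs).symm)
  have : g a = g t0 := tendsto_nhds_unique htend1 htend2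
  linarith
end

section
/- Let f : [a, b] → ℝ be a differentiable function (with a < b). Suppose that for every x ∈ (a, b), either f′(x) ≤ 0 or f(x) ≤ f(a). Then f(b) ≤ f(a). -/
/-! Let `c` be the last point of `[a, b]` where `f ≤ f a`; it exists because that set is compact.
On `(c, b)` the function stays above `f a`, so its derivative is nonpositive there and
`f b ≤ f c ≤ f a`. -/

open Set

lemma ContinuousOn.exists_le_and_forall_Ioc_lt {f : ℝ → ℝ} {a b y : ℝ}
    (hf : ContinuousOn f (Icc a b)) (hab : a ≤ b) (ha : f a ≤ y) :
    ∃ c ∈ Icc a b, f c ≤ y ∧ ∀ x ∈ Ioc c b, y < f x := by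
  have hcompact : IsCompact (Icc a b ∩ f ⁻¹' Iic y) :=
    isCompact_Icc.of_isClosed_subset
      (hf.preimage_isClosed_of_isClosed isClosed_Icc isClosed_Iic) inter_subset_left
  obtain ⟨c, ⟨hc, hfc⟩, hgreatest⟩ := hcompact.exists_isGreatest ⟨a, ⟨le_rfl, hab⟩, ha⟩
  refine ⟨c, hc, hfc, fun x hx => lt_of_not_ge fun hfx => ?_⟩
  exact hx.1.not_ge (hgreatest ⟨⟨hc.1.trans hx.1.le, hx.2⟩, hfx⟩)

lemma le_of_hasDerivAt_nonpos_of_lt {f f' : ℝ → ℝ} {a b y : ℝ} (hab : a ≤ b)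
    (hf : ContinuousOn f (Icc a b)) (hderiv : ∀ x ∈ Ioo a b, HasDerivAt f (f' x) x)
    (hf' : ∀ x ∈ Ioo a b, y < f x → f' x ≤ 0) (ha : f a ≤ y) :
    f b ≤ y := by
  obtain ⟨c, hc, hfc, habove⟩ := hf.exists_le_and_forall_Ioc_lt hab ha
  have hsub : Ioo c b ⊆ Ioo a b := Ioo_subset_Ioo_left hc.1
  have hanti : AntitoneOn f (Icc c b) := by
    refine antitoneOn_of_hasDerivWithinAt_nonpos (f' := f') (convex_Icc c b)
      (hf.mono (Icc_subset_Icc_left hc.1)) (fun x hx => ?_) fun x hx => ?_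
    all_goals rw [interior_Icc] at hx
    · exact (hderiv x (hsub hx)).hasDerivWithinAt
    · exact hf' x (hsub hx) (habove x (Ioo_subset_Ioc_self hx))
  calc f b ≤ f c := hanti ⟨le_rfl, hc.2⟩ ⟨hc.2, le_rfl⟩ hc.2
    _ ≤ y := hfc

/-- Let `f : [a, b] → ℝ` be differentiable with `a < b`. If for every
`x ∈ (a, b)` either `f'(x) ≤ 0` or `f x ≤ f a`, then `f b ≤ f a`. -/
theorem le_of_deriv_nonpos_or_le (f f' : ℝ → ℝ) (a b : ℝ) (hab : a < b)
    (hderiv : ∀ x ∈ Set.Icc a b, HasDerivAt f (f' x) x)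
    (h : ∀ x ∈ Set.Ioo a b, f' x ≤ 0 ∨ f x ≤ f a) :
    f b ≤ f a :=
  le_of_hasDerivAt_nonpos_of_lt hab.le
    (fun x hx => (hderiv x hx).continuousAt.continuousWithinAt)
    (fun x hx => hderiv x (Ioo_subset_Icc_self hx))
    (fun x hx hlt => (h x hx).resolve_right hlt.not_ge) le_rfl
end

section
/- Let σ ≥ 0, let X be a real normed space, and let f : X → ℝ be Fréchet continuously differentiable. If f is σ-quasiconvex on X, then for all x, y ∈ X with f(x) ≤ f(y) one has ⟨∇f(y), x − y⟩ ≤ −(σ/2)‖x − y‖². -/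
/-- If `f` is `σ`-quasiconvex (with `σ ≥ 0`) and Fréchet continuously
differentiable, then `f x ≤ f y` implies `⟨∇f(y), x - y⟩ ≤ -(σ/2)‖x - y‖²`. -/
theorem sigma_quasiconvex_imp_gradient_cond {X : Type*} [NormedAddCommGroup X]
    [NormedSpace ℝ X] (σ : ℝ) (hσ : 0 ≤ σ)
    (f : X → ℝ) (f' : X → X →L[ℝ] ℝ)
    (hderiv : ∀ x, HasFDerivAt f (f' x) x) (hcont : Continuous f')
    (hsqc : ∀ x y : X, ∀ l : ℝ, l ∈ Set.Ioo (0 : ℝ) 1 →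
      f (l • x + (1 - l) • y) ≤ max (f x) (f y) - σ / 2 * (l * (1 - l)) * ‖x - y‖ ^ 2) :
    ∀ x y : X, f x ≤ f y → f' y (x - y) ≤ -(σ / 2) * ‖x - y‖ ^ 2 := by
  intro x y hxy
  set g : ℝ → ℝ := fun t => f (y + t • (x - y)) with hg
  have hc : HasDerivAt (fun t : ℝ => y + t • (x - y)) (x - y) 0 := by
    simpa using ((hasDerivAt_id (0:ℝ)).smul_const (x - y)).const_add y
  have hgd : HasDerivAt g (f' y (x - y)) 0 := by
    have := (hderiv (y + (0:ℝ) • (x - y))).comp_hasDerivAt 0 hc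
    simpa [hg, Function.comp_def] using this
  have hslope : Filter.Tendsto (fun t => (g t - g 0) / t) (nhdsWithin 0 (Set.Ioi 0))
      (nhds (f' y (x - y))) := by
    have := hgd.tendsto_slope_zero_right
    simpa [slope_def_field, hg, div_eq_inv_mul] using this
  have hbound : Filter.Tendsto (fun t : ℝ => -(σ / 2) * (1 - t) * ‖x - y‖ ^ 2)
      (nhdsWithin 0 (Set.Ioi 0)) (nhds (-(σ / 2) * ‖x - y‖ ^ 2)) := by
    have : Filter.Tendsto (fun t : ℝ => -(σ / 2) * (1 - t) * ‖x - y‖ ^ 2)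
        (nhds 0) (nhds (-(σ / 2) * (1 - 0) * ‖x - y‖ ^ 2)) := by
      exact Continuous.tendsto (by continuity) 0
    simpa using this.mono_left nhdsWithin_le_nhds
  refine le_of_tendsto_of_tendsto hslope hbound ?_
  have hmem : Set.Ioo (0:ℝ) 1 ∈ nhdsWithin 0 (Set.Ioi 0) := by
    refine mem_nhdsWithin.2 ⟨Set.Iio 1, isOpen_Iio, by norm_num, ?_⟩
    intro t ht
    exact ⟨ht.2, ht.1⟩
  filter_upwards [hmem] with t ht
  have ht0 : 0 < t := ht.1
  have key := hsqc x y t ht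
  have hrw : t • x + (1 - t) • y = y + t • (x - y) := by
    simp [smul_sub, sub_smul]; abel
  rw [hrw] at key
  have hmax : max (f x) (f y) = f y := max_eq_right hxy
  have hg0 : g 0 = f y := by simp [hg]
  have h1 : g t - g 0 ≤ -(σ / 2) * (t * (1 - t)) * ‖x - y‖ ^ 2 := by
    rw [hg0]
    simp only [hg]
    linarith [key, hmax.le]
  rw [div_le_iff₀ ht0]
  calc g t - g 0 ≤ -(σ / 2) * (t * (1 - t)) * ‖x - y‖ ^ 2 := h1
    _ = -(σ / 2) * (1 - t) * ‖x - y‖ ^ 2 * t := by ring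
end

section
/- Let σ ≥ 0, let X be a real normed space, and let f : X → ℝ be Fréchet continuously differentiable. If f is σ-quasiconvex on X, then for all x, y ∈ X, ⟨∇f(x), y − x⟩ > −(σ/2)‖x − y‖² implies ⟨∇f(y), x − y⟩ ≤ −(σ/2)‖x − y‖². -/
open Filter Topology Set

lemma aux_deriv_bound {X : Type*} [NormedAddCommGroup X] [NormedSpace ℝ X]
    (σ : ℝ) (f : X → ℝ) (f' : X → X →L[ℝ] ℝ)
    (hderiv : ∀ x, HasFDerivAt f (f' x) x)
    (hsqc : ∀ x y : X, ∀ l : ℝ, l ∈ Set.Ioo (0 : ℝ) 1 →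
      f (l • x + (1 - l) • y) ≤ max (f x) (f y) - σ / 2 * (l * (1 - l)) * ‖x - y‖ ^ 2)
    (a b : X) (hab : f b ≤ f a) :
    f' a (b - a) ≤ -(σ / 2) * ‖a - b‖ ^ 2 := by
  set φ : ℝ → ℝ := fun t => f (a + t • (b - a)) with hφ
  have hc : HasDerivAt (fun t : ℝ => a + t • (b - a)) (b - a) 0 := by
    simpa using ((hasDerivAt_id (0:ℝ)).smul_const (b - a)).const_add a
  have hd : HasDerivAt φ (f' a (b - a)) 0 := by
    have := (hderiv (a + (0:ℝ) • (b - a))).comp_hasDerivAt 0 hc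
    simp only [zero_smul, add_zero] at this
    exact this
  have hslope : Tendsto (slope φ 0) (𝓝[>] 0) (𝓝 (f' a (b - a))) :=
    (hasDerivAt_iff_tendsto_slope.mp hd).mono_left
      (nhdsWithin_mono _ (fun t ht => ne_of_gt ht))
  have hg : Tendsto (fun t : ℝ => -(σ/2) * (1 - t) * ‖a - b‖ ^ 2) (𝓝[>] 0)
      (𝓝 (-(σ/2) * ‖a - b‖ ^ 2)) := by
    have : Tendsto (fun t : ℝ => -(σ/2) * (1 - t) * ‖a - b‖ ^ 2) (𝓝 0)
        (𝓝 (-(σ/2) * (1 - 0) * ‖a - b‖ ^ 2)) := by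
      apply Continuous.tendsto
      continuity
    simpa using this.mono_left nhdsWithin_le_nhds
  refine le_of_tendsto_of_tendsto hslope hg ?_
  have hmem : Ioo (0:ℝ) 1 ∈ 𝓝[>] (0:ℝ) := Ioo_mem_nhdsGT_of_mem ⟨le_refl 0, one_pos⟩
  filter_upwards [hmem] with t ht
  obtain ⟨ht0, ht1⟩ := ht
  have hpt : t • b + (1 - t) • a = a + t • (b - a) := by module
  have h1 : φ t ≤ f a - σ / 2 * (t * (1 - t)) * ‖b - a‖ ^ 2 := by
    have := hsqc b a t ⟨ht0, ht1⟩
    rwa [hpt, max_eq_right hab] at this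
  have hslope_eq : slope φ 0 t = (φ t - φ 0) / t := by
    rw [slope_def_field]; ring_nf
  rw [hslope_eq]
  have hφ0 : φ 0 = f a := by simp [hφ]
  rw [div_le_iff₀ ht0, hφ0, norm_sub_rev a b]
  nlinarith [h1]

/-- If `f` is `σ`-quasiconvex (with `σ ≥ 0`) and Fréchet continuously
differentiable, then the strengthened quasimonotonicity condition (c) holds. -/
theorem sigma_quasiconvex_imp_quasimonotone {X : Type*} [NormedAddCommGroup X]
    [NormedSpace ℝ X] (σ : ℝ) (hσ : 0 ≤ σ)
    (f : X → ℝ) (f' : X → X →L[ℝ] ℝ)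
    (hderiv : ∀ x, HasFDerivAt f (f' x) x) (hcont : Continuous f')
    (hsqc : ∀ x y : X, ∀ l : ℝ, l ∈ Set.Ioo (0 : ℝ) 1 →
      f (l • x + (1 - l) • y) ≤ max (f x) (f y) - σ / 2 * (l * (1 - l)) * ‖x - y‖ ^ 2) :
    ∀ x y : X, -(σ / 2) * ‖x - y‖ ^ 2 < f' x (y - x) →
      f' y (x - y) ≤ -(σ / 2) * ‖x - y‖ ^ 2 := by
  intro x y hxy
  by_cases h : f x ≤ f y
  · have := aux_deriv_bound σ f f' hderiv hsqc y x h
    rwa [norm_sub_rev y x] at this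
  · exfalso
    have := aux_deriv_bound σ f f' hderiv hsqc x y (le_of_not_ge h)
    linarith
end
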